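/- Let X = [x_ij] be an n×n doubly stochastic matrix. Let DW(X) = max{∑_i x_{i,σ(i)} : σ a permutation with x_{i,σ(i)} > 0 for all i} − min{∑_i x_{i,σ(i)} : σ a permutation with x_{i,σ(i)} > 0 for all i}. Let θ*(X) be the minimum of ∑_{i=1}^n u_i + ∑_{j=1}^n v_j over all real vectors u, v with u_i + v_j ≥ x_ij for every position (i,j) with x_ij > 0, and let θ_*(X) be the maximum of ∑_{i=1}^n u_i + ∑_{j=1}^n v_j over all real vectors u, v with u_i + v_j ≤ x_ij for every position (i,j) with x_ij > 0. Then both optima are attained and DW(X) = θ*(X) − θ_*(X). -/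

import Mathlib

/-!
If `σ` maximises `∑ i, w i (σ i)` among the permutations supported in `E`, any other such `τ`
differs from it by `c = σ⁻¹ * τ`, and the change of the diagonal sum is the length of `c` in the
digraph with arcs `i → i'` whenever `E i (σ i')`, of length `w i (σ i') - w i' (σ i')`.
Maximality of `σ` says that this digraph has no cycle of positive length, so heaviest simple walks
give a potential `ρ`, and `u = ρ`, `v (σ i) = w i (σ i) - ρ i` is a cover of `w` on `E` whose total
is the maximal diagonal sum (Egerváry's duality for the assignment problem). Applying this to `X`
and to `-X` on the support of `X`, which contains a permutation by Birkhoff's theorem, gives both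
optima and `DW(X) = θ* - θ_*`.
-/

open Finset

section Walks

variable {α : Type*}

def walkWeight (ℓ : α → α → ℝ) : List α → ℝ
  | x :: y :: t => ℓ x y + walkWeight ℓ (y :: t)
  | _ => 0

variable (ℓ : α → α → ℝ)

theorem walkWeight_append_cons (x : α) : ∀ s t : List α,
    walkWeight ℓ (s ++ x :: t) = walkWeight ℓ (s ++ [x]) + walkWeight ℓ (x :: t)
  | [], _ => by simp [walkWeight]
  | [_], _ => by simp [walkWeight]
  | a :: b :: s, t => by
    simp only [List.cons_append, walkWeight] at *
    rw [← List.cons_append, walkWeight_append_cons x (b :: s) t, List.cons_append]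
    ring

theorem walkWeight_cons_append_singleton (b : α) : ∀ (a : α) (m : List α),
    walkWeight ℓ (a :: m ++ [b]) = (List.zipWith ℓ (a :: m) (m ++ [b])).sum
  | a, [] => by simp [walkWeight]
  | a, c :: m => by
    simp only [List.cons_append, walkWeight, List.zipWith_cons_cons, List.sum_cons] at *
    rw [← List.cons_append, walkWeight_cons_append_singleton b c m]

end Walks

section FormPerm

variable {α β : Type*} [DecidableEq α]

theorem List.map_formPerm_eq_zipWith_rotate (f : α → α → β) {l : List α} (hl : l.Nodup) :
    l.map (fun x => f x (l.formPerm x)) = List.zipWith f l (l.rotate 1) := by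
  refine List.ext_getElem (by simp) fun k hk _ => ?_
  simp only [List.getElem_map, List.getElem_zipWith, List.getElem_rotate]
  rw [List.formPerm_apply_getElem l hl k (by simpa using hk)]

theorem List.rel_formPerm_of_isChain_cons_append_singleton {E : α → α → Prop} {a : α}
    {m : List α} (hm : (a :: m).Nodup) (hE : (a :: m ++ [a]).IsChain E) :
    ∀ x ∈ a :: m, E x ((a :: m).formPerm x) := by
  rw [List.isChain_cons_append_singleton_iff_forall₂, List.forall₂_iff_zip] at hE
  intro x hx
  apply hE.2
  rw [show m ++ [a] = (a :: m).rotate 1 by simp, List.zip, ← map_formPerm_eq_zipWith_rotate _ hm]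
  exact List.mem_map_of_mem hx

end FormPerm

section Potential

variable {α : Type*} [Fintype α] {E : α → α → Prop} {ℓ : α → α → ℝ}

theorem walkWeight_cycle_nonpos (hℓ : ∀ x, ℓ x x = 0)
    (hcyc : ∀ c : Equiv.Perm α, (∀ x, c x ≠ x → E x (c x)) → ∑ x, ℓ x (c x) ≤ 0)
    {a : α} {m : List α} (hm : (a :: m).Nodup) (hE : (a :: m ++ [a]).IsChain E) :
    walkWeight ℓ (a :: m ++ [a]) ≤ 0 := by
  classical
  set c := (a :: m).formPerm
  have hc : ∀ x, c x ≠ x → E x (c x) := fun x hx =>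
    List.rel_formPerm_of_isChain_cons_append_singleton hm hE x (List.mem_of_formPerm_apply_ne hx)
  have hsupp : ∑ x, ℓ x (c x) = ∑ x ∈ (a :: m).toFinset, ℓ x (c x) := by
    refine (sum_subset (subset_univ _) fun x _ hx => ?_).symm
    rw [List.formPerm_apply_of_notMem (by simpa using hx), hℓ]
  calc walkWeight ℓ (a :: m ++ [a])
      = ((a :: m).map fun x => ℓ x (c x)).sum := by
        rw [walkWeight_cons_append_singleton, List.map_formPerm_eq_zipWith_rotate _ hm]
        simp
    _ = ∑ x, ℓ x (c x) := by rw [hsupp, List.sum_toFinset _ hm]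
    _ ≤ 0 := hcyc c hc

/- A permutation is a product of disjoint cycles, so `hcyc` says that no cycle of `E` has positive
`ℓ`-length. -/
theorem exists_potential_of_cycle_nonpos (hℓ : ∀ x, ℓ x x = 0)
    (hcyc : ∀ c : Equiv.Perm α, (∀ x, c x ≠ x → E x (c x)) → ∑ x, ℓ x (c x) ≤ 0) :
    ∃ ρ : α → ℝ, ∀ x y, E x y → ℓ x y + ρ y ≤ ρ x := by
  let walksFrom (x : α) : Set (List α) := {l | l.Nodup ∧ l.IsChain E ∧ l.head? = some x}
  have hfin (x : α) : (walksFrom x).Finite :=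
    (Set.finite_range (Subtype.val : {l : List α // l.Nodup} → List α)).subset
      fun l hl => ⟨⟨l, hl.1⟩, rfl⟩
  have hne (x : α) : (walksFrom x).Nonempty := ⟨[x], by simp [walksFrom]⟩
  choose L hL hLmax using fun x => Set.exists_max_image _ (walkWeight ℓ) (hfin x) (hne x)
  refine ⟨fun x => walkWeight ℓ (L x), fun x y hxy => ?_⟩
  show ℓ x y + walkWeight ℓ (L y) ≤ walkWeight ℓ (L x)
  obtain ⟨hnd, hch, hhead⟩ := hL y
  by_cases hx : x ∈ L y
  · -- The part from `y` to `x` of the heaviest walk from `y` closes up with `x → y` into a cycle.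
    obtain ⟨s, t, hst⟩ := List.append_of_mem hx
    rw [hst] at hnd hch hhead ⊢
    obtain ⟨hchs, hcht⟩ := List.isChain_split.1 hch
    have hsuffix : x :: t ∈ walksFrom x :=
      ⟨hnd.sublist (List.sublist_append_right _ _), hcht, rfl⟩
    obtain ⟨m, hm⟩ : ∃ m, s ++ [x] = y :: m := by
      cases s with
      | nil => exact ⟨[], by simpa using hhead⟩
      | cons b s => exact ⟨s ++ [x], by simpa using hhead⟩
    have hcycle : walkWeight ℓ (s ++ [x] ++ [y]) ≤ 0 := by
      have hnds : (s ++ [x]).Nodup := hnd.sublist (by simp)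
      have hchy : (s ++ [x] ++ [y]).IsChain E := by
        simpa using List.isChain_append_cons_cons.2 ⟨hchs, hxy, List.isChain_singleton y⟩
      rw [hm] at hnds hchy ⊢
      exact walkWeight_cycle_nonpos hℓ hcyc hnds hchy
    have hclose : walkWeight ℓ (s ++ [x] ++ [y]) = walkWeight ℓ (s ++ [x]) + ℓ x y := by
      simp [walkWeight_append_cons ℓ x s [y], walkWeight]
    linarith [walkWeight_append_cons ℓ x s t, hLmax x _ hsuffix]
  · obtain ⟨t, ht⟩ := List.head?_eq_some_iff.1 hhead
    have hext : x :: L y ∈ walksFrom x := by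
      refine ⟨List.nodup_cons.2 ⟨hx, hnd⟩, ?_, rfl⟩
      rw [ht] at hch ⊢
      exact List.isChain_cons_cons.2 ⟨hxy, hch⟩
    simpa [ht, walkWeight] using hLmax x _ hext

end Potential

section Assignment

variable {ι : Type*} [Fintype ι] (w : ι → ι → ℝ) (E : ι → ι → Prop)

theorem diagSum_le_cover {σ : Equiv.Perm ι} (hσ : ∀ i, E i (σ i)) {u v : ι → ℝ}
    (huv : ∀ i j, E i j → w i j ≤ u i + v j) :
    ∑ i, w i (σ i) ≤ ∑ i, u i + ∑ j, v j :=
  calc ∑ i, w i (σ i) ≤ ∑ i, (u i + v (σ i)) := sum_le_sum fun i _ => huv i (σ i) (hσ i)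
    _ = ∑ i, u i + ∑ j, v j := by rw [sum_add_distrib, Equiv.sum_comp σ v]

theorem exists_cover_eq_diagSum_of_isMax {σ : Equiv.Perm ι} (hσ : ∀ i, E i (σ i))
    (hmax : ∀ τ : Equiv.Perm ι, (∀ i, E i (τ i)) → ∑ i, w i (τ i) ≤ ∑ i, w i (σ i)) :
    ∃ u v : ι → ℝ, (∀ i j, E i j → w i j ≤ u i + v j) ∧
      ∑ i, u i + ∑ j, v j = ∑ i, w i (σ i) := by
  obtain ⟨ρ, hρ⟩ := exists_potential_of_cycle_nonpos (E := fun i i' => E i (σ i'))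
    (ℓ := fun i i' => w i (σ i') - w i' (σ i')) (fun i => sub_self _) fun c hc => by
      have hτ : ∀ i, E i ((σ * c) i) := fun i => by
        by_cases hi : c i = i
        · simpa [hi] using hσ i
        · exact hc i hi
      calc ∑ i, (w i (σ (c i)) - w (c i) (σ (c i)))
          = ∑ i, w i ((σ * c) i) - ∑ i, w i (σ i) := by
            rw [sum_sub_distrib, Equiv.sum_comp c fun i => w i (σ i)]; rfl
        _ ≤ 0 := sub_nonpos.2 (hmax _ hτ)
  refine ⟨ρ, fun j => w (σ.symm j) j - ρ (σ.symm j), fun i j hij => ?_, ?_⟩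
  · have := hρ i (σ.symm j) (by simpa using hij)
    simp only [Equiv.apply_symm_apply] at this
    linarith
  · have hv : ∑ j, (w (σ.symm j) j - ρ (σ.symm j)) = ∑ i, (w i (σ i) - ρ i) := by
      rw [← Equiv.sum_comp σ]
      simp
    rw [hv, sum_sub_distrib]
    ring

theorem exists_max_diagSum_eq_min_cover (hE : ∃ σ : Equiv.Perm ι, ∀ i, E i (σ i)) :
    ∃ D : ℝ,
      (∃ σ : Equiv.Perm ι, (∀ i, E i (σ i)) ∧ ∑ i, w i (σ i) = D) ∧
      (∀ σ : Equiv.Perm ι, (∀ i, E i (σ i)) → ∑ i, w i (σ i) ≤ D) ∧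
      (∃ u v : ι → ℝ, (∀ i j, E i j → w i j ≤ u i + v j) ∧ ∑ i, u i + ∑ j, v j = D) ∧
      (∀ u v : ι → ℝ, (∀ i j, E i j → w i j ≤ u i + v j) → D ≤ ∑ i, u i + ∑ j, v j) := by
  classical
  obtain ⟨σ, hσ, hmax⟩ := (univ.filter fun σ : Equiv.Perm ι => ∀ i, E i (σ i)).exists_max_image
    (fun σ => ∑ i, w i (σ i)) (by simpa [Finset.Nonempty] using hE)
  simp only [mem_filter, mem_univ, true_and] at hσ hmax
  exact ⟨_, ⟨σ, hσ, rfl⟩, hmax, exists_cover_eq_diagSum_of_isMax w E hσ hmax,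
    fun u v => diagSum_le_cover w E hσ⟩

theorem exists_min_diagSum_eq_max_packing (hE : ∃ σ : Equiv.Perm ι, ∀ i, E i (σ i)) :
    ∃ D : ℝ,
      (∃ σ : Equiv.Perm ι, (∀ i, E i (σ i)) ∧ ∑ i, w i (σ i) = D) ∧
      (∀ σ : Equiv.Perm ι, (∀ i, E i (σ i)) → D ≤ ∑ i, w i (σ i)) ∧
      (∃ u v : ι → ℝ, (∀ i j, E i j → u i + v j ≤ w i j) ∧ ∑ i, u i + ∑ j, v j = D) ∧
      (∀ u v : ι → ℝ, (∀ i j, E i j → u i + v j ≤ w i j) → ∑ i, u i + ∑ j, v j ≤ D) := by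
  obtain ⟨D, ⟨σ, hσ, hD⟩, hmax, ⟨u, v, huv, huvD⟩, hmin⟩ :=
    exists_max_diagSum_eq_min_cover (fun i j => -w i j) E hE
  refine ⟨-D, ⟨σ, hσ, ?_⟩, fun τ hτ => ?_, ⟨-u, -v, fun i j hij => ?_, ?_⟩, fun u' v' huv' => ?_⟩
  · simp [← hD]
  · have := hmax τ hτ
    simp only [sum_neg_distrib] at this
    linarith
  · simp only [Pi.neg_apply]
    linarith [huv i j hij]
  · simp [← huvD]; ring
  · have := hmin (-u') (-v') fun i j hij => by
      simp only [Pi.neg_apply]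
      linarith [huv' i j hij]
    simp only [Pi.neg_apply, sum_neg_distrib] at this
    linarith

end Assignment

theorem exists_perm_forall_pos_of_mem_doublyStochastic {R n : Type*} [Fintype n]
    [DecidableEq n] [Field R] [LinearOrder R] [IsStrictOrderedRing R] {M : Matrix n n R}
    (hM : M ∈ doublyStochastic R n) : ∃ σ : Equiv.Perm n, ∀ i, 0 < M i (σ i) := by
  obtain ⟨c, hc, hc1, hcM⟩ := exists_eq_sum_perm_of_mem_doublyStochastic hM
  obtain ⟨σ, -, hσ⟩ : ∃ σ ∈ univ, (0 : R) < c σ :=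
    exists_lt_of_sum_lt (by simp [hc1] : ∑ _σ : Equiv.Perm n, (0 : R) < ∑ σ, c σ)
  refine ⟨σ, fun i => hσ.trans_le ?_⟩
  rw [← hcM]
  simp only [Matrix.sum_apply, Matrix.smul_apply, smul_eq_mul]
  calc c σ = c σ * σ.permMatrix R i (σ i) := by
        simp [Equiv.Perm.permMatrix, PEquiv.toMatrix_apply]
    _ ≤ ∑ τ, c τ * τ.permMatrix R i (σ i) :=
      single_le_sum (f := fun τ => c τ * τ.permMatrix R i (σ i))
        (fun τ _ => mul_nonneg (hc τ)
          (nonneg_of_mem_doublyStochastic permMatrix_mem_doublyStochastic))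
        (mem_univ σ)

/-- Duality characterization of the diagonal width of a doubly stochastic matrix
`X`: the maximum `Dmax` and minimum `Dmin` diagonal sums over permutations
avoiding the zeros of `X` are attained, the dual optima `θ* = θhi` (minimum of
`∑ uᵢ + ∑ vⱼ` subject to `uᵢ + vⱼ ≥ x_ij` on the support) and `θ_* = θlo`
(maximum of `∑ uᵢ + ∑ vⱼ` subject to `uᵢ + vⱼ ≤ x_ij` on the support) are
attained, and `DW(X) = Dmax - Dmin = θhi - θlo`. -/
theorem diagonal_width_duality {n : ℕ} (X : Matrix (Fin n) (Fin n) ℝ)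
    (hnonneg : ∀ i j, 0 ≤ X i j)
    (hrow : ∀ i, ∑ j, X i j = 1)
    (hcol : ∀ j, ∑ i, X i j = 1) :
    ∃ Dmax Dmin θhi θlo : ℝ,
      (∃ σ : Equiv.Perm (Fin n), (∀ i, 0 < X i (σ i)) ∧ ∑ i, X i (σ i) = Dmax) ∧
      (∀ σ : Equiv.Perm (Fin n), (∀ i, 0 < X i (σ i)) → ∑ i, X i (σ i) ≤ Dmax) ∧
      (∃ σ : Equiv.Perm (Fin n), (∀ i, 0 < X i (σ i)) ∧ ∑ i, X i (σ i) = Dmin) ∧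
      (∀ σ : Equiv.Perm (Fin n), (∀ i, 0 < X i (σ i)) → Dmin ≤ ∑ i, X i (σ i)) ∧
      (∃ u v : Fin n → ℝ, (∀ i j, 0 < X i j → X i j ≤ u i + v j) ∧
          ∑ i, u i + ∑ j, v j = θhi) ∧
      (∀ u v : Fin n → ℝ, (∀ i j, 0 < X i j → X i j ≤ u i + v j) →
          θhi ≤ ∑ i, u i + ∑ j, v j) ∧
      (∃ u v : Fin n → ℝ, (∀ i j, 0 < X i j → u i + v j ≤ X i j) ∧
          ∑ i, u i + ∑ j, v j = θlo) ∧
      (∀ u v : Fin n → ℝ, (∀ i j, 0 < X i j → u i + v j ≤ X i j) →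
          ∑ i, u i + ∑ j, v j ≤ θlo) ∧
      Dmax - Dmin = θhi - θlo := by
  have hsupp := exists_perm_forall_pos_of_mem_doublyStochastic
    (mem_doublyStochastic_iff_sum.2 ⟨hnonneg, hrow, hcol⟩)
  obtain ⟨Dmax, hmax, hmax_ge, hcover, hcover_le⟩ :=
    exists_max_diagSum_eq_min_cover X (fun i j => 0 < X i j) hsupp
  obtain ⟨Dmin, hmin, hmin_le, hpack, hpack_ge⟩ :=
    exists_min_diagSum_eq_max_packing X (fun i j => 0 < X i j) hsupp
  exact ⟨Dmax, Dmin, Dmax, Dmin, hmax, hmax_ge, hmin, hmin_le, hcover, hcover_le, hpack,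
    hpack_ge, rfl⟩
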